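/- arXiv:2101.10893 — 2 statements merged into one kernel-verified Lean document; each statement's English description precedes it below -/
import Mathlib

section
/- Fix α ∈ (0,1), a > 0, T ∈ ℕ with T ≥ 1, real numbers A ≤ B, outcomes y_1, …, y_T ∈ [A, B], and vectors x_1, …, x_T ∈ ℝ^{p+1} with ‖x_t‖_∞ ≤ max(1, B) for all t. Let L_T^θ = Σ_{t=1}^{T} λ_α(y_t, x_t'θ) be the cumulative pinball loss of θ, and let L̃_T^θ = Σ_{t=1}^{T} λ_α(y_t, min(max(x_t'θ, A), B)) be the cumulative pinball loss of the truncated (clamped to [A,B]) predictions. Define J̃_T(θ) = L̃_T^θ/√T + a‖θ‖₁ and J_T(θ) = L_T^θ/√T + a‖θ‖₁. Then for all θ, θ₀ ∈ ℝ^{p+1}: J̃_T(θ) ≤ J_T(θ₀) + (√T·max(1, B) + a)·‖θ − θ₀‖₁. -/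
/-- The pinball loss at level `α`: `λ_α(y, γ) = α(y − γ)` if `y ≥ γ` and
`(1 − α)(γ − y)` if `y < γ`. -/
noncomputable def pinball (α y γ : ℝ) : ℝ :=
  if γ ≤ y then α * (y - γ) else (1 - α) * (γ - y)

lemma pinball_lip {α : ℝ} (hα : α ∈ Set.Ioo (0:ℝ) 1) (y γ γ' : ℝ) :
    pinball α y γ ≤ pinball α y γ' + |γ - γ'| := by
  obtain ⟨h0, h1⟩ := hα
  unfold pinball
  rcases abs_cases (γ - γ') with ⟨he, _⟩ | ⟨he, _⟩ <;>
    split_ifs with h2 h3 h3 <;> nlinarith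

lemma pinball_clamp {α A B : ℝ} (hα : α ∈ Set.Ioo (0:ℝ) 1) {y : ℝ}
    (hy : A ≤ y) (hy' : y ≤ B) (γ : ℝ) :
    pinball α y (min (max γ A) B) ≤ pinball α y γ := by
  obtain ⟨h0, h1⟩ := hα
  unfold pinball
  rcases le_total γ y with h | h
  · have hc1 : min (max γ A) B ≤ y := le_trans (min_le_left _ _) (max_le h hy)
    have hc2 : γ ≤ min (max γ A) B := le_min (le_max_left _ _) (le_trans h hy')
    split_ifs with h3 h4 <;> nlinarith
  · have hc1 : min (max γ A) B ≤ γ := min_le_of_left_le (max_le le_rfl (le_trans hy h))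
    have hc2 : y ≤ min (max γ A) B := le_min (le_trans h (le_max_left _ _)) hy'
    split_ifs with h3 h4 <;> nlinarith

lemma clamp_lip (A B u v : ℝ) :
    |min (max u A) B - min (max v A) B| ≤ |u - v| :=
  calc |min (max u A) B - min (max v A) B|
      ≤ max |max u A - max v A| |B - B| := abs_min_sub_min_le_max _ _ _ _
    _ = |max u A - max v A| := by simp
    _ ≤ |u - v| := abs_max_sub_max_le_abs _ _ _

theorem truncated_potential_lipschitz {p : ℕ} (α a A B : ℝ)
    (hα : α ∈ Set.Ioo (0 : ℝ) 1) (ha : 0 < a) (hAB : A ≤ B)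
    (T : ℕ) (hT : 1 ≤ T)
    (y : ℕ → ℝ) (hy : ∀ t ∈ Finset.Icc 1 T, y t ∈ Set.Icc A B)
    (x : ℕ → Fin (p + 1) → ℝ)
    (hx : ∀ t ∈ Finset.Icc 1 T, ∀ i, |x t i| ≤ max 1 B)
    (θ θ₀ : Fin (p + 1) → ℝ) :
    (∑ t ∈ Finset.Icc 1 T,
        pinball α (y t) (min (max (∑ i, x t i * θ i) A) B)) / Real.sqrt T
        + a * ∑ i, |θ i|
      ≤ (∑ t ∈ Finset.Icc 1 T, pinball α (y t) (∑ i, x t i * θ₀ i)) / Real.sqrt T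
        + a * ∑ i, |θ₀ i|
        + (Real.sqrt T * max 1 B + a) * ∑ i, |θ i - θ₀ i| := by
  set M : ℝ := max 1 B with hM
  set S : ℝ := ∑ i, |θ i - θ₀ i| with hS
  have hS0 : 0 ≤ S := Finset.sum_nonneg fun i _ => abs_nonneg _
  have hM0 : 0 < M := lt_of_lt_of_le one_pos (le_max_left _ _)
  have hsT : (0:ℝ) < Real.sqrt T := Real.sqrt_pos.mpr (by exact_mod_cast hT)
  -- pointwise bound
  have key : ∀ t ∈ Finset.Icc 1 T,
      pinball α (y t) (min (max (∑ i, x t i * θ i) A) B)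
        ≤ pinball α (y t) (∑ i, x t i * θ₀ i) + M * S := by
    intro t ht
    obtain ⟨hyA, hyB⟩ := hy t ht
    have hdiff : |(∑ i, x t i * θ i) - ∑ i, x t i * θ₀ i| ≤ M * S := by
      rw [← Finset.sum_sub_distrib]
      calc |∑ i, (x t i * θ i - x t i * θ₀ i)|
          ≤ ∑ i, |x t i * θ i - x t i * θ₀ i| := Finset.abs_sum_le_sum_abs _ _
        _ ≤ ∑ i, M * |θ i - θ₀ i| := by
            refine Finset.sum_le_sum fun i _ => ?_
            rw [← mul_sub, abs_mul]
            exact mul_le_mul_of_nonneg_right (hx t ht i) (abs_nonneg _)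
        _ = M * S := by rw [hS, Finset.mul_sum]
    calc pinball α (y t) (min (max (∑ i, x t i * θ i) A) B)
        ≤ pinball α (y t) (min (max (∑ i, x t i * θ₀ i) A) B)
            + |min (max (∑ i, x t i * θ i) A) B - min (max (∑ i, x t i * θ₀ i) A) B| :=
          pinball_lip hα _ _ _
      _ ≤ pinball α (y t) (∑ i, x t i * θ₀ i) + M * S := by
          have h1 := pinball_clamp hα hyA hyB (∑ i, x t i * θ₀ i)
          have h2 := (clamp_lip A B (∑ i, x t i * θ i) (∑ i, x t i * θ₀ i)).trans hdiff
          linarith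
  -- sum the bound
  have hsum : (∑ t ∈ Finset.Icc 1 T,
      pinball α (y t) (min (max (∑ i, x t i * θ i) A) B))
      ≤ (∑ t ∈ Finset.Icc 1 T, pinball α (y t) (∑ i, x t i * θ₀ i)) + T * (M * S) := by
    calc _ ≤ ∑ t ∈ Finset.Icc 1 T, (pinball α (y t) (∑ i, x t i * θ₀ i) + M * S) :=
          Finset.sum_le_sum key
      _ = _ := by
          rw [Finset.sum_add_distrib, Finset.sum_const, Nat.card_Icc]
          simp [nsmul_eq_mul]
  have hdvd : (∑ t ∈ Finset.Icc 1 T,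
        pinball α (y t) (min (max (∑ i, x t i * θ i) A) B)) / Real.sqrt T
      ≤ (∑ t ∈ Finset.Icc 1 T, pinball α (y t) (∑ i, x t i * θ₀ i)) / Real.sqrt T
        + Real.sqrt T * M * S := by
    have hTs : Real.sqrt T * Real.sqrt T = T :=
      Real.mul_self_sqrt (Nat.cast_nonneg T)
    rw [div_le_iff₀ hsT, add_mul, div_mul_cancel₀ _ hsT.ne']
    have heq : Real.sqrt T * M * S * Real.sqrt T = T * (M * S) := by
      calc Real.sqrt T * M * S * Real.sqrt T
          = (Real.sqrt T * Real.sqrt T) * (M * S) := by ring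
        _ = T * (M * S) := by rw [hTs]
    linarith [hsum]
  have htr : a * ∑ i, |θ i| ≤ a * ∑ i, |θ₀ i| + a * S := by
    rw [← mul_add]
    refine mul_le_mul_of_nonneg_left ?_ ha.le
    rw [hS, ← Finset.sum_add_distrib]
    refine Finset.sum_le_sum fun i _ => ?_
    have := abs_add_le (θ₀ i) (θ i - θ₀ i)
    simpa using this
  nlinarith [hdvd, htr]
end

section
/- Fix α ∈ (0,1), a > 0, T ∈ ℕ with T ≥ 1, real numbers A ≤ B, outcomes y_1, …, y_T ∈ [A, B], and vectors x_1, …, x_T ∈ ℝ^{p+1} with ‖x_t‖_∞ ≤ max(1, B) for all t. Let L̃_T^θ = Σ_{t=1}^{T} λ_α(y_t, min(max(x_t'θ, A), B)) and J̃_T(θ) = L̃_T^θ/√T + a‖θ‖₁; let L_T^{θ₀} = Σ_{t=1}^{T} λ_α(y_t, x_t'θ₀) and J_T(θ₀) = L_T^{θ₀}/√T + a‖θ₀‖₁; and set b_T = √T·max(1, B) + a. Then for every θ₀ ∈ ℝ^{p+1}, the Lebesgue integral ∫_{ℝ^{p+1}} exp(−J̃_T(θ)) dθ ≥ exp(−J_T(θ₀))·(2/b_T)^{p+1}.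 -/
open MeasureTheory

/-!
Truncating the prediction to `[A, B]` never increases the pinball loss, and the loss is
1-Lipschitz in the prediction, so with `‖x_t‖_∞ ≤ max(1, B)` the truncated potential satisfies
`J̃_T(θ) ≤ J_T(θ₀) + b_T ‖θ - θ₀‖₁`. Hence `exp(-J̃_T)` dominates `exp(-J_T(θ₀))` times a product
of Laplace densities centred at `θ₀`, whose integral is `(2 / b_T)^(p+1)`. Integrability of
`exp(-J̃_T)` comes from `J̃_T(θ) ≥ a ‖θ‖₁`.
-/

open Real Set

theorem integral_exp_neg_mul_abs {b : ℝ} (hb : 0 < b) : ∫ x : ℝ, exp (-(b * |x|)) = 2 / b := by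
  rw [integral_comp_abs (f := fun x => exp (-(b * x))),
    integral_comp_mul_left_Ioi (fun x => exp (-x)) 0 hb, mul_zero, integral_exp_neg_Ioi,
    neg_zero, exp_zero, smul_eq_mul, mul_one, div_eq_mul_inv]

theorem integral_exp_neg_mul_sum_abs_sub {ι : Type*} [Fintype ι] {b : ℝ} (hb : 0 < b)
    (c : ι → ℝ) :
    ∫ θ : ι → ℝ, exp (-(b * ∑ i, |θ i - c i|)) = (2 / b) ^ Fintype.card ι := by
  simp_rw [Finset.mul_sum, ← Finset.sum_neg_distrib, exp_sum]
  rw [integral_fintype_prod_volume_eq_prod (fun i u => exp (-(b * |u - c i|)))]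
  simp_rw [integral_sub_right_eq_self (fun u => exp (-(b * |u|))), integral_exp_neg_mul_abs hb,
    Finset.prod_const, Finset.card_univ]

theorem integrable_exp_neg_mul_sum_abs_sub {ι : Type*} [Fintype ι] {b : ℝ} (hb : 0 < b)
    (c : ι → ℝ) : Integrable fun θ : ι → ℝ => exp (-(b * ∑ i, |θ i - c i|)) :=
  Integrable.of_integral_ne_zero <| by
    rw [integral_exp_neg_mul_sum_abs_sub hb]; positivity

theorem exp_neg_mul_pow_le_integral_exp_neg {ι : Type*} [Fintype ι] {J : (ι → ℝ) → ℝ}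
    (hJ : Measurable J) {a b c : ℝ} (ha : 0 < a) (hb : 0 < b) (θ₀ : ι → ℝ)
    (hJ_ge : ∀ θ, a * ∑ i, |θ i| ≤ J θ) (hJ_le : ∀ θ, J θ ≤ c + b * ∑ i, |θ i - θ₀ i|) :
    exp (-c) * (2 / b) ^ Fintype.card ι ≤ ∫ θ, exp (-J θ) := by
  have hJ_int : Integrable fun θ => exp (-J θ) := by
    refine (integrable_exp_neg_mul_sum_abs_sub ha 0).mono
      hJ.neg.exp.aestronglyMeasurable (ae_of_all _ fun θ => ?_)
    simp only [Pi.zero_apply, sub_zero, norm_eq_abs, abs_exp, exp_le_exp, neg_le_neg_iff, hJ_ge]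
  calc exp (-c) * (2 / b) ^ Fintype.card ι
      = ∫ θ : ι → ℝ, exp (-c) * exp (-(b * ∑ i, |θ i - θ₀ i|)) := by
        rw [integral_const_mul, integral_exp_neg_mul_sum_abs_sub hb]
    _ ≤ ∫ θ, exp (-J θ) := by
        refine integral_mono ((integrable_exp_neg_mul_sum_abs_sub hb θ₀).const_mul _) hJ_int
          fun θ => ?_
        rw [← exp_add, exp_le_exp]
        linarith [hJ_le θ]

@[fun_prop]
theorem continuous_pinball (α y : ℝ) : Continuous (pinball α y) :=
  continuous_if_le continuous_id continuous_const (by fun_prop) (by fun_prop)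
    fun γ h => by simp [h]

theorem abs_sum_mul_sub_sum_mul_le {ι : Type*} [Fintype ι] {x : ι → ℝ} {M : ℝ}
    (hx : ∀ i, |x i| ≤ M) (θ θ' : ι → ℝ) :
    |∑ i, x i * θ i - ∑ i, x i * θ' i| ≤ M * ∑ i, |θ i - θ' i| := by
  rw [← Finset.sum_sub_distrib, Finset.mul_sum]
  refine (Finset.abs_sum_le_sum_abs _ _).trans (Finset.sum_le_sum fun i _ => ?_)
  rw [← mul_sub, abs_mul]
  exact mul_le_mul_of_nonneg_right (hx i) (abs_nonneg _)

section pinball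

variable {α : ℝ} (hα : α ∈ Icc 0 1)
include hα

theorem pinball_nonneg (y γ : ℝ) : 0 ≤ pinball α y γ := by
  obtain ⟨h0, h1⟩ := hα
  unfold pinball
  split <;> nlinarith

theorem lipschitzWith_pinball (y : ℝ) : LipschitzWith 1 (pinball α y) := by
  obtain ⟨h0, h1⟩ := hα
  refine LipschitzWith.of_le_add_mul 1 fun γ γ' => ?_
  rw [NNReal.coe_one, one_mul, Real.dist_eq]
  unfold pinball
  split_ifs <;> cases abs_cases (γ - γ') <;> nlinarith

theorem pinball_min_max_le {A B y : ℝ} (hy : y ∈ Icc A B) (γ : ℝ) :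
    pinball α y (min (max γ A) B) ≤ pinball α y γ := by
  obtain ⟨h0, h1⟩ := hα
  obtain ⟨hA, hB⟩ := hy
  have hAB := hA.trans hB
  unfold pinball
  rcases le_total γ A with hγA | hγA <;> rcases le_total γ B with hγB | hγB <;>
    simp only [max_eq_left, max_eq_right, min_eq_left, min_eq_right, hγA, hγB, hAB] <;>
    split_ifs <;> nlinarith

theorem pinball_min_max_le_add {A B y : ℝ} (hy : y ∈ Icc A B) (u v : ℝ) :
    pinball α y (min (max u A) B) ≤ pinball α y v + |u - v| :=
  calc pinball α y (min (max u A) B) ≤ pinball α y (min (max v A) B) + |u - v| := by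
        simpa [Real.dist_eq] using ((lipschitzWith_pinball hα y).comp
          ((LipschitzWith.id.max_const A).min_const B)).le_add_mul u v
    _ ≤ pinball α y v + |u - v| := by grw [pinball_min_max_le hα hy v]

theorem sum_pinball_min_max_le {τ ι : Type*} [Fintype ι] {s : Finset τ} {y : τ → ℝ}
    {x : τ → ι → ℝ} {A B M : ℝ} (hy : ∀ t ∈ s, y t ∈ Icc A B)
    (hx : ∀ t ∈ s, ∀ i, |x t i| ≤ M) (θ θ₀ : ι → ℝ) :
    ∑ t ∈ s, pinball α (y t) (min (max (∑ i, x t i * θ i) A) B)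
      ≤ ∑ t ∈ s, pinball α (y t) (∑ i, x t i * θ₀ i) + s.card * (M * ∑ i, |θ i - θ₀ i|) := by
  rw [← nsmul_eq_mul, ← Finset.sum_const, ← Finset.sum_add_distrib]
  refine Finset.sum_le_sum fun t ht =>
    (pinball_min_max_le_add hα (hy t ht) _ (∑ i, x t i * θ₀ i)).trans ?_
  grw [abs_sum_mul_sub_sum_mul_le (hx t ht) θ θ₀]

end pinball

theorem integral_exp_neg_truncated_potential_ge_general {p : ℕ} (α a A B : ℝ)
    (hα : α ∈ Set.Ioo (0 : ℝ) 1) (ha : 0 < a)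
    (T : ℕ)
    (y : ℕ → ℝ) (hy : ∀ t ∈ Finset.Icc 1 T, y t ∈ Set.Icc A B)
    (x : ℕ → Fin (p + 1) → ℝ)
    (hx : ∀ t ∈ Finset.Icc 1 T, ∀ i, |x t i| ≤ max 1 B)
    (θ₀ : Fin (p + 1) → ℝ) :
    ∫ θ : Fin (p + 1) → ℝ,
        Real.exp (-((∑ t ∈ Finset.Icc 1 T,
            pinball α (y t) (min (max (∑ i, x t i * θ i) A) B)) / Real.sqrt T
          + a * ∑ i, |θ i|))
      ≥ Real.exp (-((∑ t ∈ Finset.Icc 1 T,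
            pinball α (y t) (∑ i, x t i * θ₀ i)) / Real.sqrt T
          + a * ∑ i, |θ₀ i|))
        * (2 / (Real.sqrt T * max 1 B + a)) ^ (p + 1) := by
  have hα' := Ioo_subset_Icc_self hα
  have hb : 0 < √T * max 1 B + a := by positivity
  convert exp_neg_mul_pow_le_integral_exp_neg ?_ ha hb θ₀ (fun θ => ?_) (fun θ => ?_)
    using 2
  · rw [Fintype.card_fin]
  · fun_prop
  · exact le_add_of_nonneg_left <|
      div_nonneg (Finset.sum_nonneg fun t _ => pinball_nonneg hα' _ _) (sqrt_nonneg _)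
  · have hloss := sum_pinball_min_max_le hα' hy hx θ θ₀
    rw [Nat.card_Icc, add_tsub_cancel_right] at hloss
    have hloss_div := div_le_div_of_nonneg_right hloss (sqrt_nonneg T)
    rw [add_div, mul_div_right_comm, Real.div_sqrt] at hloss_div
    have hnorm : ∑ i, |θ i| ≤ ∑ i, |θ₀ i| + ∑ i, |θ i - θ₀ i| := by
      rw [← Finset.sum_add_distrib]
      exact Finset.sum_le_sum fun i _ => by linarith [abs_sub_abs_le_abs_sub (θ i) (θ₀ i)]
    linarith [mul_le_mul_of_nonneg_left hnorm ha.le]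

theorem integral_exp_neg_truncated_potential_ge {p : ℕ} (α a A B : ℝ)
    (hα : α ∈ Set.Ioo (0 : ℝ) 1) (ha : 0 < a) (hAB : A ≤ B)
    (T : ℕ) (hT : 1 ≤ T)
    (y : ℕ → ℝ) (hy : ∀ t ∈ Finset.Icc 1 T, y t ∈ Set.Icc A B)
    (x : ℕ → Fin (p + 1) → ℝ)
    (hx : ∀ t ∈ Finset.Icc 1 T, ∀ i, |x t i| ≤ max 1 B)
    (θ₀ : Fin (p + 1) → ℝ) :
    ∫ θ : Fin (p + 1) → ℝ,
        Real.exp (-((∑ t ∈ Finset.Icc 1 T,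
            pinball α (y t) (min (max (∑ i, x t i * θ i) A) B)) / Real.sqrt T
          + a * ∑ i, |θ i|))
      ≥ Real.exp (-((∑ t ∈ Finset.Icc 1 T,
            pinball α (y t) (∑ i, x t i * θ₀ i)) / Real.sqrt T
          + a * ∑ i, |θ₀ i|))
        * (2 / (Real.sqrt T * max 1 B + a)) ^ (p + 1) :=
  integral_exp_neg_truncated_potential_ge_general α a A B hα ha T y hy x hx θ₀
end
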